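/- Reversing a covered edge of a DAG yields a DAG. That is, if G is a DAG with edge a → b such that the parents of b in G equal the parents of a together with a itself (the edge is 'covered'), then the graph obtained by replacing a → b with b → a is acyclic. -/

import Mathlib

/-! Let `F` be `E` without the edge `a → b`. A cycle after the reversal either avoids the new
edge `b → a`, and is then a cycle of `E`, or passes through it, and then yields an `F`-path from
`a` to `b`. There is no such path: its last edge `c → b` has `c ≠ a`, so `c` is a parent of `a`
by coveredness, and the path closes up to an `E`-cycle through `a`. -/

namespace Relation

variable {α : Type*} {r : α → α → Prop} {a b : α}

theorem transGen_sup_edge_cases {x y : α}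
    (h : TransGen (fun u w => r u w ∨ (u = b ∧ w = a)) x y) :
    TransGen r x y ∨ (ReflTransGen r x b ∧ ReflTransGen r a y) := by
  induction h with
  | single h =>
    rcases h with h | ⟨rfl, rfl⟩
    · exact .inl (.single h)
    · exact .inr ⟨.refl, .refl⟩
  | tail _ hcy ih =>
    rcases hcy with hcy | ⟨rfl, rfl⟩
    · rcases ih with hxc | ⟨hxb, hac⟩
      · exact .inl (hxc.tail hcy)
      · exact .inr ⟨hxb, hac.tail hcy⟩
    · rcases ih with hxb | ⟨hxb, _⟩
      · exact .inr ⟨hxb.to_reflTransGen, .refl⟩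
      · exact .inr ⟨hxb, .refl⟩

theorem not_transGen_sup_edge_self (hr : ∀ v, ¬TransGen r v v) (hab : ¬ReflTransGen r a b)
    (v : α) : ¬TransGen (fun u w => r u w ∨ (u = b ∧ w = a)) v v := by
  intro hv
  rcases transGen_sup_edge_cases hv with hvv | ⟨hvb, hav⟩
  · exact hr v hvv
  · exact hab (hav.trans hvb)

theorem not_reflTransGen_of_covered (hr : ∀ v, ¬TransGen r v v) (hab : r a b)
    (hpa : ∀ c, r c b → c = a ∨ r c a) :
    ¬ReflTransGen (fun u w => r u w ∧ ¬(u = a ∧ w = b)) a b := by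
  intro h
  rcases h.cases_tail with hba | ⟨c, hac, hcb⟩
  · exact hr a (.single (hba ▸ hab))
  · have hca : r c a := (hpa c hcb.1).resolve_left fun hc => hcb.2 ⟨hc, rfl⟩
    exact hr a (.tail' (ReflTransGen.mono (fun _ _ => And.left) _ _ hac) hca)

end Relation

/-- Reversing a covered edge of a DAG yields a DAG. If `E a b` and the parents of `b`
are exactly the parents of `a` together with `a`, then the graph obtained by replacing
the edge a → b with b → a is acyclic. -/
theorem covered_edge_reversal_acyclic {V : Type*} (E : V → V → Prop) (a b : V)
    (hacyc : ∀ v : V, ¬ Relation.TransGen E v v)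
    (hab : E a b)
    (hcov : {u | E u b} = {u | E u a} ∪ {a}) :
    ∀ v : V, ¬ Relation.TransGen
      (fun u w => (E u w ∧ ¬ (u = a ∧ w = b)) ∨ (u = b ∧ w = a)) v v := by
  have hpa : ∀ c, E c b → c = a ∨ E c a := fun c hc => by
    simpa [or_comm] using hcov.subset hc
  have hdel : ∀ v, ¬Relation.TransGen (fun u w => E u w ∧ ¬(u = a ∧ w = b)) v v :=
    fun v hv => hacyc v (Relation.TransGen.mono (fun _ _ => And.left) _ _ hv)
  exact Relation.not_transGen_sup_edge_self hdel
    (Relation.not_reflTransGen_of_covered hacyc hab hpa)
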